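/- arXiv:2404.14166 — 7 statements merged into one kernel-verified Lean document; each statement's English description precedes it below -/
import Mathlib

section
/- Let A be a set with a distinguished element 0 and a partial ternary operation p such that for all x,y ∈ A: p(x,0,0) is defined and equals x, and p(y,y,x) is defined and equals x. Define the partial ternary operation q on A by q(x,y,z) = p(z, p(x,y,0), y), defined exactly when p(x,y,0) is defined and the outer application of p is defined. Then for every x ∈ A: q(x,x,0) is defined and equals x, q(0,0,x) is defined and equals x, and q(x,0,x) is defined and equals 0. -/
/-- On a pointed set `(A, z)`, from a partial ternary operation
`p` satisfying the existence equations `p x z z =ᵉ x` and `p y y x =ᵉ x`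
(corresponding to the matrix `StrUni`), the partial ternary term
`q x y w = p w (p x y z) y` (defined exactly when `p x y z` is defined and
the outer application of `p` is defined, i.e. as a `Part.bind`) satisfies
`q x x z =ᵉ x`, `q z z x =ᵉ x` and `q x z x =ᵉ z` (corresponding to the
matrix `StrUni'`). Here `a ∈ t` means the partial value `t` is defined and
equal to `a`. -/
theorem strUni_gives_strUni' {A : Type*} (z : A)
    (p : A → A → A → Part A)
    (h1 : ∀ x : A, x ∈ p x z z) (h2 : ∀ x y : A, x ∈ p y y x)
    (q : A → A → A → Part A)
    (hq : ∀ x y w : A, q x y w = (p x y z).bind (fun t => p w t y)) :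
    ∀ x : A, x ∈ q x x z ∧ x ∈ q z z x ∧ z ∈ q x z x := by
  intro x
  refine ⟨?_, ?_, ?_⟩
  · rw [hq]; exact Part.mem_bind_iff.mpr ⟨z, h2 z x, h2 x z⟩
  · rw [hq]; exact Part.mem_bind_iff.mpr ⟨z, h2 z z, h1 x⟩
  · rw [hq]; exact Part.mem_bind_iff.mpr ⟨x, h1 x, h2 z x⟩
end

section
/- Let A be a set with a distinguished element 0 and a partial ternary operation q such that for every x ∈ A: q(x,x,0) is defined and equals x, q(0,0,x) is defined and equals x, and q(x,0,x) is defined and equals 0. Define the partial ternary operation p on A by p(x,y,z) = q(q(y,0,x), q(y,0,x), z), defined exactly when q(y,0,x) is defined and the outer application of q is defined. Then for all x,y ∈ A: p(x,0,0) is defined and equals x, and p(y,y,x) is defined and equals x. -/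
/-- On a pointed set `(A, z)`, from a partial ternary operation
`q` satisfying the existence equations `q x x z =ᵉ x`, `q z z x =ᵉ x` and
`q x z x =ᵉ z` (corresponding to the matrix `StrUni'`), the partial ternary
term `p x y w = q (q y z x) (q y z x) w` (defined exactly when `q y z x` is
defined and the outer application of `q` is defined, i.e. as a `Part.bind`)
satisfies `p x z z =ᵉ x` and `p y y x =ᵉ x` (corresponding to the matrix
`StrUni`). Here `a ∈ t` means the partial value `t` is defined and equal
to `a`. -/
theorem strUni'_gives_strUni {A : Type*} (z : A)
    (q : A → A → A → Part A)
    (h1 : ∀ x : A, x ∈ q x x z) (h2 : ∀ x : A, x ∈ q z z x)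
    (h3 : ∀ x : A, z ∈ q x z x)
    (p : A → A → A → Part A)
    (hp : ∀ x y w : A, p x y w = (q y z x).bind (fun t => q t t w)) :
    ∀ x y : A, x ∈ p x z z ∧ x ∈ p y y x := by
  intro x y
  constructor
  · rw [hp]
    exact Part.mem_bind_iff.2 ⟨x, h2 x, h1 x⟩
  · rw [hp]
    exact Part.mem_bind_iff.2 ⟨z, h3 y, h2 x⟩
end

section
/- Let A be a set with a (total) 5-ary operation p : A⁵ → A such that for all x,y ∈ A: p(x,x,x,y,y) = x, p(x,y,y,x,x) = x and p(y,x,y,x,y) = x. Define q : A⁴ → A by q(x,y,z,w) = p(p(y,z,z,w,w), z, p(x,z,z,z,z), w, p(x,w,z,w,z)). Then for all x,y ∈ A: q(y,y,x,x) = x, q(y,x,y,x) = x and q(x,x,x,y) = x. -/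
/-- From a (total) Δ*-special cube term `p` on a set `A`
(a 5-ary operation with `p x x x y y = x`, `p x y y x x = x` and
`p y x y x y = x`), the 4-ary term
`q x y z w = p (p y z z w w) z (p x z z z z) w (p x w z w z)`
is a 3-edge term: `q y y x x = x`, `q y x y x = x` and `q x x x y = x`. -/
theorem special_cube_term_gives_edge_term {A : Type*}
    (p : A → A → A → A → A → A)
    (h1 : ∀ x y : A, p x x x y y = x)
    (h2 : ∀ x y : A, p x y y x x = x)
    (h3 : ∀ x y : A, p y x y x y = x)
    (q : A → A → A → A → A)
    (hq : ∀ x y z w : A,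
      q x y z w = p (p y z z w w) z (p x z z z z) w (p x w z w z)) :
    ∀ x y : A, q y y x x = x ∧ q y x y x = x ∧ q x x x y = x := by
  intro x y
  refine ⟨?_, ?_, ?_⟩ <;> rw [hq] <;> simp [h1, h2, h3]
end

section
/- Let n > 0 and m,k ≥ 0 be integers, M ∈ matr(n,m,k) a matrix, C a finitely complete category, and 𝓜 a class of monomorphisms in C stable under pullbacks. Then the following are equivalent: (i) every relation r : R ↣ Xⁿ belonging to 𝓜 is M-closed; (ii) every relation r : R ↣ X₁ × ⋯ × X_n belonging to 𝓜 is strictly M-closed. -/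
open CategoryTheory CategoryTheory.Limits

universe w v u

/-- A (non-pointed) extended matrix `M ∈ matr(n,m,k)`: `n > 0` rows, `m` left
columns and one right column, with entries in `{x₁, …, x_k}` (modelled as
`Fin k`). `matr` is the union over all `n,m,k`, i.e. the type `Matr`. -/
structure Matr where
  n : ℕ
  m : ℕ
  k : ℕ
  npos : 0 < n
  left : Fin n → Fin m → Fin k
  right : Fin n → Fin k

namespace Matr

variable {C : Type u} [Category.{v} C]

/-- A relation `r : R ⟶ P`, where `pr` exhibits `P` as the `n`-fold product
`Xⁿ`, is `M`-closed: for every object `Z` and every interpretation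
`f : {x₁,…,x_k} → C(Z,X)` of the entries of `M`, if for every left column `j`
the induced morphism `Z ⟶ Xⁿ` factors through `r`, then so does the morphism
induced by the right column. -/
def IsClosed (M : Matr) {X P R : C} (pr : Fin M.n → (P ⟶ X))
    (hP : IsLimit (Fan.mk P pr)) (r : R ⟶ P) : Prop :=
  ∀ (Z : C) (f : Fin M.k → (Z ⟶ X)),
    (∀ j : Fin M.m, ∃ g : Z ⟶ R,
        g ≫ r = hP.lift (Fan.mk Z (fun i => f (M.left i j)))) →
    ∃ g : Z ⟶ R, g ≫ r = hP.lift (Fan.mk Z (fun i => f (M.right i)))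

/-- A relation `r : R ⟶ P`, where `pr` exhibits `P` as the product
`X₁ × ⋯ × X_n` of a family `X : Fin n → C`, is strictly `M`-closed: for every
object `Z` and every row-wise interpretation `fᵢ : {x₁,…,x_k} → C(Z,Xᵢ)`, if
every left column's induced morphism `Z ⟶ X₁ × ⋯ × X_n` factors through `r`,
then so does the right column's induced morphism. -/
def IsStrictClosed (M : Matr) {X : Fin M.n → C} {P R : C}
    (pr : ∀ i, P ⟶ X i) (hP : IsLimit (Fan.mk P pr)) (r : R ⟶ P) : Prop :=
  ∀ (Z : C) (f : ∀ i, Fin M.k → (Z ⟶ X i)),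
    (∀ j : Fin M.m, ∃ g : Z ⟶ R,
        g ≫ r = hP.lift (Fan.mk Z (fun i => f i (M.left i j)))) →
    ∃ g : Z ⟶ R, g ≫ r = hP.lift (Fan.mk Z (fun i => f i (M.right i)))

/-- `C` has `M`-closed `W`-relations: every `n`-ary relation `r : R ⟶ Xⁿ`
belonging to the class of monomorphisms `W` is `M`-closed. -/
def HasClosedRels (M : Matr) (C : Type u) [Category.{v} C]
    (W : MorphismProperty C) : Prop :=
  ∀ (X P R : C) (pr : Fin M.n → (P ⟶ X)) (hP : IsLimit (Fan.mk P pr))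
    (r : R ⟶ P), W r → M.IsClosed pr hP r

/-- `C` has `S`-closed `W`-relations. -/
def HasSClosedRels (S : Set Matr) (C : Type u) [Category.{v} C]
    (W : MorphismProperty C) : Prop :=
  ∀ M ∈ S, HasClosedRels M C W

end Matr

/-- The class of strong monomorphisms of `C`, as a `MorphismProperty`. -/
def strongMonos (C : Type u) [Category.{v} C] : MorphismProperty C :=
  fun _ _ f => StrongMono f

/-- For a matrix `M ∈ matr(n,m,k)`, a finitely complete category
`C` and a class `W` of monomorphisms of `C` stable under pullbacks, `C` has
`M`-closed `W`-relations (every relation `r : R ↣ Xⁿ` in `W` is `M`-closed)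
if and only if `C` has strictly `M`-closed `W`-relations (every relation
`r : R ↣ X₁ × ⋯ × X_n` in `W` is strictly `M`-closed). -/
theorem closed_iff_strictClosed (M : Matr) (C : Type u) [Category.{v} C]
    [HasFiniteLimits C] (W : MorphismProperty C)
    (hW_mono : ∀ ⦃A B : C⦄ (f : A ⟶ B), W f → Mono f)
    (hW_pb : W.IsStableUnderBaseChange) :
    (∀ (X P R : C) (pr : Fin M.n → (P ⟶ X)) (hP : IsLimit (Fan.mk P pr))
        (r : R ⟶ P), W r → M.IsClosed pr hP r) ↔
    (∀ (X : Fin M.n → C) (P R : C) (pr : ∀ i, P ⟶ X i)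
        (hP : IsLimit (Fan.mk P pr)) (r : R ⟶ P), W r → M.IsStrictClosed pr hP r) := by
  
  constructor
  · intro h X P R pr hP r hr
    -- Let Y be the product of the family X, Q the n-fold power of Y.
    set Y := ∏ᶜ X with hY
    set Q := ∏ᶜ (fun _ : Fin M.n => Y) with hQdef
    have hQ : IsLimit (Fan.mk Q (fun i => Pi.π (fun _ : Fin M.n => Y) i)) :=
      productIsProduct _
    -- comparison map e : Q ⟶ P
    let e : Q ⟶ P :=
      hP.lift (Fan.mk Q (fun i => Pi.π (fun _ : Fin M.n => Y) i ≫ Pi.π X i))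
    have he : ∀ i, e ≫ pr i = Pi.π (fun _ : Fin M.n => Y) i ≫ Pi.π X i := by
      intro i
      exact hP.fac (Fan.mk Q (fun i => Pi.π (fun _ : Fin M.n => Y) i ≫ Pi.π X i)) ⟨i⟩
    -- pull back r along e
    haveI := hW_pb
    have hr' : W (pullback.fst e r) := MorphismProperty.pullback_fst e r hr
    have hclosed := h Y Q (pullback e r) _ hQ (pullback.fst e r) hr'
    intro Z f hleft
    let F : Fin M.k → (Z ⟶ Y) := fun a => Pi.lift (fun i => f i a)
    have key : ∀ (c : Fin M.n → Fin M.k),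
        hQ.lift (Fan.mk Z (fun i => F (c i))) ≫ e
          = hP.lift (Fan.mk Z (fun i => f i (c i))) := by
      intro c
      apply hP.hom_ext
      rintro ⟨i⟩
      have h1 := hP.fac (Fan.mk Z (fun i => f i (c i))) ⟨i⟩
      have h2 := hQ.fac (Fan.mk Z (fun i => F (c i))) ⟨i⟩
      simp only [Fan.mk_pt, Fan.mk_π_app] at h1 h2 ⊢
      rw [Category.assoc, he i, ← Category.assoc, h2]
      simp [F, h1]
    have hl : ∀ j : Fin M.m, ∃ g : Z ⟶ pullback e r,
        g ≫ pullback.fst e r = hQ.lift (Fan.mk Z (fun i => F (M.left i j))) := by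
      intro j
      obtain ⟨g₀, hg₀⟩ := hleft j
      refine ⟨pullback.lift (hQ.lift (Fan.mk Z (fun i => F (M.left i j)))) g₀ ?_,
        pullback.lift_fst _ _ _⟩
      rw [key (fun i => M.left i j), hg₀]
    obtain ⟨g, hg⟩ := hclosed Z F hl
    refine ⟨g ≫ pullback.snd e r, ?_⟩
    rw [Category.assoc, ← pullback.condition, ← Category.assoc, hg,
      key (fun i => M.right i)]
  · intro h X P R pr hP r hr
    intro Z f hleft
    exact h (fun _ => X) P R pr hP r hr Z (fun _ => f) hleft
end

section
/- Let n > 0 and m,k ≥ 0 be integers, M ∈ matr_*(n,m,k) a pointed matrix, C a finitely complete pointed category, and 𝓜 a class of monomorphisms in C stable under pullbacks. Then the following are equivalent: (i) every relation r : R ↣ Xⁿ belonging to 𝓜 is M-closed; (ii) every relation r : R ↣ X₁ × ⋯ × X_n belonging to 𝓜 is strictly M-closed. -/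
open CategoryTheory CategoryTheory.Limits

universe w v u

/-- A pointed extended matrix `M ∈ matr_*(n,m,k)`: `n > 0` rows, `m` left
columns and one right column, with entries in `{∗, x₁, …, x_k}` (modelled as
`Option (Fin k)`, where `none` is `∗`). `matr_*` is the union over all
`n,m,k`, i.e. the type `MatrStar`. -/
structure MatrStar where
  n : ℕ
  m : ℕ
  k : ℕ
  npos : 0 < n
  left : Fin n → Fin m → Option (Fin k)
  right : Fin n → Option (Fin k)

namespace MatrStar

variable {C : Type u} [Category.{v} C] [HasZeroMorphisms C]

/-- A relation `r : R ⟶ P` in a pointed category, where `pr` exhibits `P` as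
the `n`-fold product `Xⁿ`, is `M`-closed: for every object `Z` and every
interpretation `f : {∗,x₁,…,x_k} → C(Z,X)` with `f ∗ = 0`, if for every left
column `j` the induced morphism `Z ⟶ Xⁿ` factors through `r`, then so does
the morphism induced by the right column. -/
def IsClosed (M : MatrStar) {X P R : C} (pr : Fin M.n → (P ⟶ X))
    (hP : IsLimit (Fan.mk P pr)) (r : R ⟶ P) : Prop :=
  ∀ (Z : C) (f : Option (Fin M.k) → (Z ⟶ X)), f none = 0 →
    ((∀ j : Fin M.m, ∃ g : Z ⟶ R,
        g ≫ r = hP.lift (Fan.mk Z (fun i => f (M.left i j)))) →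
    ∃ g : Z ⟶ R, g ≫ r = hP.lift (Fan.mk Z (fun i => f (M.right i))))

/-- A relation `r : R ⟶ P`, where `pr` exhibits `P` as the product
`X₁ × ⋯ × X_n` of a family `X : Fin n → C`, is strictly `M`-closed: for every
object `Z` and every row-wise interpretation `fᵢ : {∗,x₁,…,x_k} → C(Z,Xᵢ)`
with `fᵢ ∗ = 0`, if every left column's induced morphism factors through `r`,
then so does the right column's induced morphism. -/
def IsStrictClosed (M : MatrStar) {X : Fin M.n → C} {P R : C}
    (pr : ∀ i, P ⟶ X i) (hP : IsLimit (Fan.mk P pr)) (r : R ⟶ P) : Prop :=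
  ∀ (Z : C) (f : ∀ i, Option (Fin M.k) → (Z ⟶ X i)), (∀ i, f i none = 0) →
    ((∀ j : Fin M.m, ∃ g : Z ⟶ R,
        g ≫ r = hP.lift (Fan.mk Z (fun i => f i (M.left i j)))) →
    ∃ g : Z ⟶ R, g ≫ r = hP.lift (Fan.mk Z (fun i => f i (M.right i))))

/-- `C` has `M`-closed `W`-relations: every `n`-ary relation `r : R ⟶ Xⁿ`
belonging to the class of monomorphisms `W` is `M`-closed. -/
def HasClosedRels (M : MatrStar) (C : Type u) [Category.{v} C]
    [HasZeroMorphisms C] (W : MorphismProperty C) : Prop :=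
  ∀ (X P R : C) (pr : Fin M.n → (P ⟶ X)) (hP : IsLimit (Fan.mk P pr))
    (r : R ⟶ P), W r → M.IsClosed pr hP r

/-- `C` has `S`-closed `W`-relations. -/
def HasSClosedRels (S : Set MatrStar) (C : Type u) [Category.{v} C]
    [HasZeroMorphisms C] (W : MorphismProperty C) : Prop :=
  ∀ M ∈ S, HasClosedRels M C W

end MatrStar

/-!
A row-wise interpretation `fᵢ : {∗,x₁,…,x_k} → C(Z,Xᵢ)` amalgamates into a single
interpretation `F b = (f₁ b, …, f_n b)` in `Y = X₁ × ⋯ × X_n`. The morphism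
`q : Yⁿ ⟶ X₁ × ⋯ × X_n`, `(y₁, …, y_n) ↦ (π₁ y₁, …, π_n y_n)`, carries each column
induced by `F` to the column induced by `(fᵢ)`, so strict closedness of `r` follows from
closedness of its pullback along `q`, which lies in `W` again. The converse is the
special case of a constant family `Xᵢ = X`.
-/

namespace CategoryTheory.Limits

variable {C : Type u} [Category.{v} C]

theorem exists_comp_pullback_fst_eq_iff {A B D Z : C} (q : A ⟶ D) (r : B ⟶ D)
    [HasPullback q r] (h : Z ⟶ A) :
    (∃ g : Z ⟶ pullback q r, g ≫ pullback.fst q r = h) ↔ ∃ g : Z ⟶ B, g ≫ r = h ≫ q := by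
  constructor
  · rintro ⟨g, rfl⟩
    exact ⟨g ≫ pullback.snd q r, by simp [pullback.condition]⟩
  · rintro ⟨g, hg⟩
    exact ⟨pullback.lift h g hg.symm, pullback.lift_fst _ _ _⟩

noncomputable def diagonalProj {ι : Type w} (X : ι → C) [HasProduct X]
    [HasProduct fun _ : ι => ∏ᶜ X] {P : C} {pr : ∀ i, P ⟶ X i}
    (hP : IsLimit (Fan.mk P pr)) : ∏ᶜ (fun _ : ι => ∏ᶜ X) ⟶ P :=
  Fan.IsLimit.lift hP fun i => Pi.π _ i ≫ Pi.π X i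

theorem lift_comp_diagonalProj {ι : Type w} (X : ι → C) [HasProduct X]
    [HasProduct fun _ : ι => ∏ᶜ X] {P : C} {pr : ∀ i, P ⟶ X i}
    (hP : IsLimit (Fan.mk P pr)) {Z : C} (g : ι → (Z ⟶ ∏ᶜ X)) :
    (productIsProduct _).lift (Fan.mk Z g) ≫ diagonalProj X hP =
      hP.lift (Fan.mk Z fun i => g i ≫ Pi.π X i) := by
  refine Fan.IsLimit.hom_ext hP _ _ fun i => ?_
  have hq : diagonalProj X hP ≫ pr i = Pi.π _ i ≫ Pi.π X i := hP.fac _ ⟨i⟩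
  have hg : (productIsProduct _).lift (Fan.mk Z g) ≫ Pi.π _ i = g i :=
    (productIsProduct _).fac _ ⟨i⟩
  rw [fan_mk_proj, Category.assoc, hq, reassoc_of% hg]
  exact (hP.fac (Fan.mk Z fun i => g i ≫ Pi.π X i) ⟨i⟩).symm

end CategoryTheory.Limits

namespace MatrStar

variable {C : Type u} [Category.{v} C] [HasZeroMorphisms C]

theorem IsStrictClosed.isClosed {M : MatrStar} {X P R : C} {pr : Fin M.n → (P ⟶ X)}
    {hP : IsLimit (Fan.mk P pr)} {r : R ⟶ P}
    (h : M.IsStrictClosed (X := fun _ => X) pr hP r) : M.IsClosed pr hP r :=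
  fun Z f hf0 hcols => h Z (fun _ => f) (fun _ => hf0) hcols

theorem isStrictClosed_of_isClosed_pullback (M : MatrStar) {X : Fin M.n → C} {P R : C}
    {pr : ∀ i, P ⟶ X i} (hP : IsLimit (Fan.mk P pr)) (r : R ⟶ P) [HasProduct X]
    [HasProduct fun _ : Fin M.n => ∏ᶜ X] [HasPullback (diagonalProj X hP) r]
    (h : M.IsClosed (Pi.π _) (productIsProduct _) (pullback.fst (diagonalProj X hP) r)) :
    M.IsStrictClosed pr hP r := by
  intro Z f hf0 hcols
  let F : Option (Fin M.k) → (Z ⟶ ∏ᶜ X) := fun b => Pi.lift fun i => f i b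
  have hF0 : F none = 0 := by ext; simp [F, hf0]
  have column (a : Fin M.n → Option (Fin M.k)) :
      hP.lift (Fan.mk Z fun i => f i (a i)) =
        (productIsProduct _).lift (Fan.mk Z fun i => F (a i)) ≫ diagonalProj X hP := by
    rw [lift_comp_diagonalProj]
    congr 2
    funext i
    exact (Pi.lift_π (fun l => f l (a i)) i).symm
  simp only [column, ← exists_comp_pullback_fst_eq_iff] at hcols ⊢
  exact h Z F hF0 hcols

end MatrStar

theorem closed_iff_strictClosed_pointed_general (M : MatrStar) (C : Type u)
    [Category.{v} C] [HasFiniteLimits C] [HasZeroMorphisms C]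
    (W : MorphismProperty C)
    (hW_pb : W.IsStableUnderBaseChange) :
    (∀ (X P R : C) (pr : Fin M.n → (P ⟶ X)) (hP : IsLimit (Fan.mk P pr))
        (r : R ⟶ P), W r → M.IsClosed pr hP r) ↔
    (∀ (X : Fin M.n → C) (P R : C) (pr : ∀ i, P ⟶ X i)
        (hP : IsLimit (Fan.mk P pr)) (r : R ⟶ P), W r → M.IsStrictClosed pr hP r) := by
  constructor
  · intro hclosed X P R pr hP r hr
    exact M.isStrictClosed_of_isClosed_pullback hP r
      (hclosed _ _ _ _ _ _ (W.pullback_fst _ _ hr))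
  · intro hstrict X P R pr hP r hr
    exact (hstrict _ P R pr hP r hr).isClosed

/-- For a pointed matrix `M ∈ matr_*(n,m,k)`, a finitely complete
pointed category `C` and a class `W` of monomorphisms of `C` stable under
pullbacks, `C` has `M`-closed `W`-relations (every relation `r : R ↣ Xⁿ` in
`W` is `M`-closed) if and only if `C` has strictly `M`-closed `W`-relations
(every relation `r : R ↣ X₁ × ⋯ × X_n` in `W` is strictly `M`-closed). -/
theorem closed_iff_strictClosed_pointed (M : MatrStar) (C : Type u)
    [Category.{v} C] [HasFiniteLimits C] [HasZeroObject C] [HasZeroMorphisms C]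
    (W : MorphismProperty C)
    (hW_mono : ∀ ⦃A B : C⦄ (f : A ⟶ B), W f → Mono f)
    (hW_pb : W.IsStableUnderBaseChange) :
    (∀ (X P R : C) (pr : Fin M.n → (P ⟶ X)) (hP : IsLimit (Fan.mk P pr))
        (r : R ⟶ P), W r → M.IsClosed pr hP r) ↔
    (∀ (X : Fin M.n → C) (P R : C) (pr : ∀ i, P ⟶ X i)
        (hP : IsLimit (Fan.mk P pr)) (r : R ⟶ P), W r → M.IsStrictClosed pr hP r) :=
  closed_iff_strictClosed_pointed_general M C W hW_pb
end

section
/- For a set S of non-pointed matrices (S ⊆ matr), the following are equivalent: (i) every finitely complete category with S-closed relations is a preorder; (ii) the opposite category Setᵒᵖ of the category of sets does not have S-closed relations. -/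
open CategoryTheory CategoryTheory.Limits

universe w v u

/-!
In `Setᵒᵖ` an `n`-ary relation on `X` is a quotient `R` of the coproduct `n ⬝ X`, and
`M`-closedness asks the right column of an interpretation to be constant on the fibres of
`n ⬝ X ↠ R` whenever the left columns are. Comparing a point of copy `i` with a point of copy `i'`
shows that `Setᵒᵖ` has `M`-closed relations iff, for all rows `i, i'`, the right entries of `i`
and `i'` are identified by the equivalence relation generated by identifying, column by column,
the left entries of `i` with those of `i'`. Conversely, in a finitely complete category with
`M`-closed relations and two distinct parallel morphisms `φ ≠ ψ : X ⟶ Y`, interpreting the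
variables by pairs `X ⟶ Y × Y` of `φ`s and `ψ`s, with an equalizer of two projections
`(Y × Y)ⁿ ⟶ Y` as relation, forces the same identifications. So if `Setᵒᵖ` has `S`-closed
relations, so does its full subcategory (finite sets)ᵒᵖ, which is closed under finite limits,
has a small model in all universes and is not a preorder.
-/

@[simp]
theorem lift_fanMk_comp {C : Type*} [Category C] {ι : Type*} {X : ι → C} {P Z : C}
    {pr : ∀ i, P ⟶ X i} (hP : IsLimit (Fan.mk P pr)) (c : ∀ i, Z ⟶ X i) (i : ι) :
    hP.lift (Fan.mk Z c) ≫ pr i = c i :=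
  hP.fac _ ⟨i⟩

@[simp]
theorem lift_fanMk_comp_assoc {C : Type*} [Category C] {ι : Type*} {X : ι → C} {P Z W : C}
    {pr : ∀ i, P ⟶ X i} (hP : IsLimit (Fan.mk P pr)) (c : ∀ i, Z ⟶ X i) (i : ι)
    (u : X i ⟶ W) : hP.lift (Fan.mk Z c) ≫ pr i ≫ u = c i ≫ u := by
  rw [← Category.assoc, lift_fanMk_comp]

theorem exists_comp_eq_iff_factorsThrough_unop {R P Z : (Type w)ᵒᵖ} (r : R ⟶ P) [Mono r]
    (h : Z ⟶ P) : (∃ g, g ≫ r = h) ↔ Function.FactorsThrough h.unop r.unop := by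
  constructor
  · rintro ⟨g, rfl⟩ a b hab
    simp [hab]
  · intro hf
    have hs := surjective_of_epi r.unop
    refine ⟨(TypeCat.ofHom (h.unop ∘ Function.surjInv hs)).op, Quiver.Hom.unop_inj ?_⟩
    ext p
    exact hf (Function.surjInv_eq hs _)

theorem exists_unop_proj_eq_of_isLimit {ι : Type*} {X : ι → (Type w)ᵒᵖ} {P : (Type w)ᵒᵖ}
    {pr : ∀ i, P ⟶ X i} (hP : IsLimit (Fan.mk P pr)) (p : P.unop) :
    ∃ i x, (pr i).unop x = p := by
  obtain ⟨⟨⟨i⟩⟩, x, hx⟩ := Types.jointly_surjective_of_isColimit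
    (isColimitCoconeLeftOpOfCone _ hP) p
  exact ⟨i, x, hx⟩

namespace Matr

/-- `(t, false)` stands for the variable `t` evaluated at a point of row `i`, and `(t, true)`
for `t` evaluated at a point of row `i'`. -/
def leftRel (M : Matr) (i i' : Fin M.n) : Fin M.k × Bool → Fin M.k × Bool → Prop :=
  fun p q => ∃ j, p = (M.left i j, false) ∧ q = (M.left i' j, true)

def RightDeterminedByLeft (M : Matr) : Prop :=
  ∀ i i', Quot.mk (M.leftRel i i') (M.right i, false) = Quot.mk _ (M.right i', true)

theorem RightDeterminedByLeft.eq_of_left_eq {M : Matr} (hM : M.RightDeterminedByLeft)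
    {α β : Type*} (f : Fin M.k → α → β) {i i' : Fin M.n} {x x' : α}
    (hl : ∀ j, f (M.left i j) x = f (M.left i' j) x') :
    f (M.right i) x = f (M.right i') x' :=
  congrArg (Quot.lift (fun p : Fin M.k × Bool => f p.1 (if p.2 then x' else x))
    (by rintro _ _ ⟨j, rfl, rfl⟩; exact hl j)) (hM i i')

theorem HasClosedRels.of_fullyFaithful {M : Matr} {C : Type*} {D : Type*} [Category C]
    [Category D] (F : C ⥤ D) [F.Full] [F.Faithful]
    [PreservesLimitsOfShape (Discrete (Fin M.n)) F] [F.PreservesMonomorphisms]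
    (h : M.HasClosedRels D (MorphismProperty.monomorphisms D)) :
    M.HasClosedRels C (MorphismProperty.monomorphisms C) := by
  intro X P R pr hP r hr Z f hleft
  have : Mono r := hr
  have hFP : IsLimit (Fan.mk (F.obj P) fun i => F.map (pr i)) :=
    isLimitFanMkObjOfIsLimit F _ pr hP
  have hlift (c : Fin M.n → (Z ⟶ X)) : F.map (hP.lift (Fan.mk Z c)) =
      hFP.lift (Fan.mk (F.obj Z) fun i => F.map (c i)) :=
    hFP.uniq (Fan.mk _ _) _ fun ⟨i⟩ =>
      (F.map_comp _ _).symm.trans (congrArg F.map (lift_fanMk_comp hP c i))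
  obtain ⟨g, hg⟩ := h _ _ _ _ hFP (F.map r) (F.map_mono r) (F.obj Z) (fun t => F.map (f t))
    fun j => by
      obtain ⟨g, hg⟩ := hleft j
      exact ⟨F.map g, by rw [← F.map_comp, hg, hlift]⟩
  exact ⟨F.preimage g, F.map_injective (by rw [F.map_comp, F.map_preimage, hg, hlift])⟩

theorem HasClosedRels.map_right_eq {M : Matr} {C : Type*} [Category C] [HasFiniteLimits C]
    (h : M.HasClosedRels C (MorphismProperty.monomorphisms C)) {X Y : C} (i i' : Fin M.n)
    (w : Fin M.k × Bool → (X ⟶ Y)) (hw : ∀ p q, M.leftRel i i' p q → w p = w q) :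
    w (M.right i, false) = w (M.right i', true) := by
  let f (t : Fin M.k) : X ⟶ Y ⨯ Y := prod.lift (w (t, false)) (w (t, true))
  let a : ∏ᶜ (fun _ : Fin M.n => Y ⨯ Y) ⟶ Y := Pi.π _ i ≫ prod.fst
  let b : ∏ᶜ (fun _ : Fin M.n => Y ⨯ Y) ⟶ Y := Pi.π _ i' ≫ prod.snd
  have hleft (j : Fin M.m) : (productIsProduct _).lift (Fan.mk X fun i => f (M.left i j)) ≫ a =
      (productIsProduct _).lift (Fan.mk X fun i => f (M.left i j)) ≫ b := by
    simpa [a, b, f, prod.lift_fst, prod.lift_snd] using hw _ _ ⟨j, rfl, rfl⟩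
  obtain ⟨g, hg⟩ := h _ _ _ _ (productIsProduct _) (equalizer.ι a b)
    (inferInstanceAs (Mono _)) X f fun j => ⟨equalizer.lift _ (hleft j), equalizer.lift_ι _ _⟩
  have hab : (g ≫ equalizer.ι a b) ≫ a = (g ≫ equalizer.ι a b) ≫ b := by
    rw [Category.assoc, Category.assoc, equalizer.condition]
  simpa [hg, a, b, f, prod.lift_fst, prod.lift_snd] using hab

theorem rightDeterminedByLeft_of_hasClosedRels {M : Matr} {C : Type*} [Category C]
    [HasFiniteLimits C] {X Y : C} [Nontrivial (X ⟶ Y)]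
    (h : M.HasClosedRels C (MorphismProperty.monomorphisms C)) : M.RightDeterminedByLeft := by
  classical
  intro i i'
  by_contra hne
  obtain ⟨φ, ψ, hφψ⟩ := exists_pair_ne (X ⟶ Y)
  let w (p : Fin M.k × Bool) : X ⟶ Y :=
    if Quot.mk (M.leftRel i i') p = Quot.mk _ (M.right i, false) then φ else ψ
  have hw := h.map_right_eq i i' w fun p q hpq => by simp only [w, Quot.sound hpq]
  simp only [w, if_pos, if_neg (Ne.symm hne)] at hw
  exact hφψ hw

theorem hasClosedRels_typeOp {M : Matr} (hM : M.RightDeterminedByLeft) :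
    M.HasClosedRels (Type w)ᵒᵖ (MorphismProperty.monomorphisms (Type w)ᵒᵖ) := by
  intro X P R pr hP r hr Z f hleft
  have : Mono r := hr
  have hL (c : Fin M.n → (Z ⟶ X)) i x :
      (hP.lift (Fan.mk Z c)).unop ((pr i).unop x) = (c i).unop x := by
    rw [← types_comp_apply, ← unop_comp, lift_fanMk_comp]
  simp only [exists_comp_eq_iff_factorsThrough_unop] at hleft ⊢
  intro p p' hpp
  obtain ⟨i, x, rfl⟩ := exists_unop_proj_eq_of_isLimit hP p
  obtain ⟨i', x', rfl⟩ := exists_unop_proj_eq_of_isLimit hP p'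
  rw [hL, hL]
  exact hM.eq_of_left_eq (fun t => (f t).unop) fun j => by simpa only [hL] using hleft j hpp

theorem hasClosedRels_typeOp_iff {M : Matr} :
    M.HasClosedRels (Type w)ᵒᵖ (MorphismProperty.monomorphisms (Type w)ᵒᵖ) ↔
      M.RightDeterminedByLeft :=
  have : Nontrivial (Opposite.op (ULift.{w} Bool) ⟶ Opposite.op PUnit.{w + 1}) :=
    (Quiver.Hom.opEquiv.symm.trans TypeCat.homEquiv).nontrivial
  ⟨rightDeterminedByLeft_of_hasClosedRels (X := Opposite.op (ULift.{w} Bool))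
    (Y := Opposite.op PUnit), hasClosedRels_typeOp⟩

end Matr

/-- The skeleton of (finite sets)ᵒᵖ, with objects lifted to `Type u₁` and morphisms to
`Type v₁`. -/
def FinSetOp.{u₁, v₁} : Type u₁ := ULiftHom.{v₁} (ULift.{u₁} FintypeCat.Skeleton.{0}ᵒᵖ)

namespace FinSetOp

attribute [local instance] uliftCategory

instance : Category.{v} FinSetOp.{u, v} :=
  inferInstanceAs (Category (ULiftHom.{v} (ULift.{u} FintypeCat.Skeleton.{0}ᵒᵖ)))

noncomputable def equivalence : FinSetOp.{u, v} ≌ FintypeCat.{0}ᵒᵖ :=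
  ULiftHom.equiv.symm.trans (ULift.equivalence.symm.trans FintypeCat.Skeleton.equivalence.op)

instance : HasFiniteLimits FinSetOp.{u, v} :=
  ⟨fun _ _ _ => Adjunction.hasLimitsOfShape_of_equivalence equivalence.functor⟩

noncomputable def toTypeOp : FinSetOp.{u, v} ⥤ Typeᵒᵖ :=
  equivalence.functor ⋙ FintypeCat.incl.op

instance : toTypeOp.Full := by unfold toTypeOp; infer_instance

instance : toTypeOp.Faithful := by unfold toTypeOp; infer_instance

instance : PreservesFiniteLimits toTypeOp := by
  have := preservesFiniteLimits_op FintypeCat.incl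
  unfold toTypeOp; infer_instance

theorem hasClosedRels {M : Matr} (hM : M.RightDeterminedByLeft) :
    M.HasClosedRels FinSetOp.{u, v} (MorphismProperty.monomorphisms _) :=
  Matr.HasClosedRels.of_fullyFaithful toTypeOp (Matr.hasClosedRels_typeOp hM)

def obj.{u₁, v₁} (n : ℕ) : FinSetOp.{u₁, v₁} := ⟨Opposite.op (FintypeCat.Skeleton.mk n)⟩

instance : Nontrivial (obj.{u, v} 2 ⟶ obj 1) :=
  have : Nontrivial (toTypeOp.obj (obj.{u, v} 2) ⟶ toTypeOp.obj (obj 1)) :=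
    (Quiver.Hom.opEquiv.symm.trans TypeCat.homEquiv).nontrivial
      (β := ULift.{0} (Fin 1) → ULift (Fin 2))
  (Functor.FullyFaithful.ofFullyFaithful toTypeOp).homEquiv.nontrivial

end FinSetOp

/-- For a set `S` of non-pointed matrices, every finitely
complete category with `S`-closed relations is a preorder (at most one
morphism between any two objects) if and only if `Setᵒᵖ` (the opposite of
the category of sets) does not have `S`-closed relations. -/
theorem trivial_iff_not_SetOp (S : Set Matr) :
    (∀ (C : Type u) [Category.{v} C] [HasFiniteLimits C],
        Matr.HasSClosedRels S C (MorphismProperty.monomorphisms C) →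
        ∀ X Y : C, Subsingleton (X ⟶ Y)) ↔
    ¬ Matr.HasSClosedRels S (Type w)ᵒᵖ
        (MorphismProperty.monomorphisms (Type w)ᵒᵖ) := by
  constructor
  · intro H hSet
    have hS (M) (hM : M ∈ S) : M.RightDeterminedByLeft :=
      Matr.hasClosedRels_typeOp_iff.1 (hSet M hM)
    exact not_subsingleton _
      (H FinSetOp.{u, v} (fun M hM => FinSetOp.hasClosedRels (hS M hM)) (.obj 2) (.obj 1))
  · intro hSet C _ _ hC X Y
    by_contra hXY
    rw [not_subsingleton_iff_nontrivial] at hXY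
    exact hSet fun M hM => Matr.hasClosedRels_typeOp_iff.2
      (Matr.rightDeterminedByLeft_of_hasClosedRels (X := X) (Y := Y) (hC M hM))
end

section
/- A finitely complete category C has Ari-closed strong relations if and only if it has both Mal-closed strong relations and Maj-closed strong relations; that is, C is weakly arithmetical if and only if it is weakly Mal'tsev and weakly majority. -/
open CategoryTheory CategoryTheory.Limits

universe w v u

/-- The Mal'tsev matrix `Mal ∈ matr(2,3,2)`, with rows `(x₁ x₂ x₂ | x₁)` and
`(x₂ x₂ x₁ | x₁)`; here `x₁` is `0` and `x₂` is `1` in `Fin 2`. -/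
def MalMatr : Matr :=
  ⟨2, 3, 2, by omega, ![![0, 1, 1], ![1, 1, 0]], ![0, 0]⟩

/-- The majority matrix `Maj ∈ matr(3,3,2)`, with rows `(x₁ x₁ x₂ | x₁)`,
`(x₁ x₂ x₁ | x₁)` and `(x₂ x₁ x₁ | x₁)`. -/
def MajMatr : Matr :=
  ⟨3, 3, 2, by omega, ![![0, 0, 1], ![0, 1, 0], ![1, 0, 0]], ![0, 0, 0]⟩

/-- The arithmetical matrix `Ari ∈ matr(3,3,2)`, with rows `(x₁ x₂ x₂ | x₁)`,
`(x₂ x₂ x₁ | x₁)` and `(x₁ x₂ x₁ | x₁)`. -/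
def AriMatr : Matr :=
  ⟨3, 3, 2, by omega, ![![0, 1, 1], ![1, 1, 0], ![0, 1, 0]], ![0, 0, 0]⟩

/-!
Pulling a strong relation `r ↣ Xⁿ` back along the map `(Xⁿ)ᵖ ⟶ Xⁿ` whose `i`-th coordinate is
the `i`-th coordinate of the `σ i`-th factor gives a strong `p`-ary relation on `Xⁿ`; applying
the `M`-rule to it (where `M` has `p` rows) shows that `r` is closed under `M` regrouped along
`σ : Fin n → Fin p`, with an independent substitution of the variables in each row. The theorem
then reduces to finite derivations on columns over `{x₁, x₂}`: `Mal` is the first two rows of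
`Ari`; `Maj` follows from `Ari` in two steps through the column `(x₂, x₂, x₁)`; and `Ari` follows
from `Maj`, which yields the same column, followed by `Mal` regrouped along `(0, 1, 0)`.
-/

section

variable {C : Type u} [Category.{v} C]

instance strongMono_pullback_snd {P Q R : C} (r : R ⟶ P) (u : Q ⟶ P) [HasPullback r u]
    [StrongMono r] : StrongMono (pullback.snd r u) where
  mono := inferInstance
  rlp _ _ _ _ := inferInstance

theorem exists_comp_pullback_snd_eq_iff {P Q R Z : C} (r : R ⟶ P) (u : Q ⟶ P)
    [HasPullback r u] (h : Z ⟶ Q) :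
    (∃ g : Z ⟶ pullback r u, g ≫ pullback.snd r u = h) ↔ ∃ g : Z ⟶ R, g ≫ r = h ≫ u :=
  ⟨fun ⟨g, hg⟩ => ⟨g ≫ pullback.fst r u, by rw [Category.assoc, pullback.condition, ← hg,
      Category.assoc]⟩,
    fun ⟨g, hg⟩ => ⟨pullback.lift g h hg, pullback.lift_snd _ _ _⟩⟩

def relColumns {n : ℕ} {X P R Z : C} {pr : Fin n → (P ⟶ X)} (hP : IsLimit (Fan.mk P pr))
    (r : R ⟶ P) {α : Type*} (v : α → (Z ⟶ X)) : Set (Fin n → α) :=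
  {w | ∃ g : Z ⟶ R, g ≫ r = hP.lift (Fan.mk Z fun i => v (w i))}

end

namespace Matr

/-- Closure of a set of `n`-ary columns under the rule of `M` applied along a regrouping: row `i`
of the columns is row `σ i` of `M`, with its variables substituted by `g i`. -/
def IsClosedSet (M : Matr) {n : ℕ} {α : Type*} (S : Set (Fin n → α)) : Prop :=
  ∀ (σ : Fin n → Fin M.n) (g : Fin n → Fin M.k → α),
    (∀ j, (fun i => g i (M.left (σ i) j)) ∈ S) → (fun i => g i (M.right (σ i))) ∈ S

theorem HasClosedRels.isClosedSet_relColumns {C : Type u} [Category.{v} C] [HasFiniteLimits C]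
    {M : Matr} (hM : M.HasClosedRels C (strongMonos C)) {n : ℕ} {X P R Z : C}
    (pr : Fin n → (P ⟶ X)) (hP : IsLimit (Fan.mk P pr)) (r : R ⟶ P) (hr : StrongMono r)
    {α : Type*} (v : α → (Z ⟶ X)) : M.IsClosedSet (relColumns hP r v) := by
  intro σ g hleft
  let hQ := productIsProduct fun _ : Fin M.n => P
  let u : ∏ᶜ (fun _ : Fin M.n => P) ⟶ P := hP.lift (Fan.mk _ fun i => Pi.π _ (σ i) ≫ pr i)
  let F : Fin M.k → (Z ⟶ P) := fun x => hP.lift (Fan.mk Z fun i => v (g i x))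
  have lift_comp_u : ∀ c : Fin M.n → Fin M.k, hQ.lift (Fan.mk Z fun a => F (c a)) ≫ u =
      hP.lift (Fan.mk Z fun i => v (g i (c (σ i)))) := by
    intro c
    refine Fan.IsLimit.hom_ext hP _ _ fun i => ?_
    simp only [u, Category.assoc, Fan.IsLimit.lift_proj]
    exact (hQ.fac_assoc _ ⟨σ i⟩ (pr i)).trans (hP.fac _ ⟨i⟩)
  have hclosed := hM P _ (pullback r u) _ hQ (pullback.snd r u)
    (inferInstanceAs (StrongMono _)) Z F
  simp only [exists_comp_pullback_snd_eq_iff, lift_comp_u] at hclosed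
  exact hclosed hleft

theorem IsClosedSet.mem_of_columns_mem {M : Matr} {n : ℕ} {α : Type*}
    {S : Set (Fin n → α)} (hS : M.IsClosedSet S) {T : Finset (Fin n → α)} (hT : ∀ w ∈ T, w ∈ S)
    (σ : Fin n → Fin M.n) (g : Fin n → Fin M.k → α)
    (hleft : ∀ j, (fun i => g i (M.left (σ i) j)) ∈ T) {w : Fin n → α}
    (hw : (fun i => g i (M.right (σ i))) = w) : w ∈ S :=
  hw ▸ hS σ g fun j => hT _ (hleft j)

theorem IsClosedSet.malMatr_right_mem_of_ari {S : Set (Fin 2 → Fin 2)}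
    (hS : AriMatr.IsClosedSet S) (h : ∀ j, (fun i => MalMatr.left i j) ∈ S) :
    MalMatr.right ∈ S := by
  let T : Finset (Fin 2 → Fin 2) := Finset.univ.image fun j i => MalMatr.left i j
  have hT : ∀ w ∈ T, w ∈ S := Finset.forall_mem_image.2 fun j _ => h j
  exact hS.mem_of_columns_mem hT (![0, 1] : Fin 2 → Fin 3) ![![0, 1], ![0, 1]]
    (by decide) (w := ![0, 0]) (by decide)

theorem IsClosedSet.majMatr_right_mem_of_ari {S : Set (Fin 3 → Fin 2)}
    (hS : AriMatr.IsClosedSet S) (h : ∀ j, (fun i => MajMatr.left i j) ∈ S) :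
    MajMatr.right ∈ S := by
  let T : Finset (Fin 3 → Fin 2) := Finset.univ.image fun j i => MajMatr.left i j
  have hT : ∀ w ∈ T, w ∈ S := Finset.forall_mem_image.2 fun j _ => h j
  have h110 : ![1, 1, 0] ∈ S :=
    hS.mem_of_columns_mem hT id ![![1, 0], ![1, 0], ![0, 1]] (by decide) (by decide)
  exact hS.mem_of_columns_mem ((Finset.forall_mem_insert _ _ _).2 ⟨h110, hT⟩) id
    ![![0, 1], ![0, 1], ![0, 0]] (by decide) (w := ![0, 0, 0]) (by decide)

theorem IsClosedSet.ariMatr_right_mem_of_mal_of_maj {S : Set (Fin 3 → Fin 2)}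
    (hMal : MalMatr.IsClosedSet S) (hMaj : MajMatr.IsClosedSet S)
    (h : ∀ j, (fun i => AriMatr.left i j) ∈ S) : AriMatr.right ∈ S := by
  let T : Finset (Fin 3 → Fin 2) := Finset.univ.image fun j i => AriMatr.left i j
  have hT : ∀ w ∈ T, w ∈ S := Finset.forall_mem_image.2 fun j _ => h j
  have h110 : ![1, 1, 0] ∈ S :=
    hMaj.mem_of_columns_mem hT id ![![1, 0], ![1, 0], ![0, 1]] (by decide) (by decide)
  exact hMal.mem_of_columns_mem ((Finset.forall_mem_insert _ _ _).2 ⟨h110, hT⟩)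
    (![0, 1, 0] : Fin 3 → Fin 2)
    ![![0, 1], ![0, 1], ![0, 0]] (by decide) (w := ![0, 0, 0]) (by decide)

end Matr

/-- A finitely complete category `C` has `Ari`-closed strong
relations if and only if it has both `Mal`-closed strong relations and
`Maj`-closed strong relations; i.e. `C` is weakly arithmetical iff it is
weakly Mal'tsev and weakly majority. -/
theorem weakly_arithmetical_iff_weakly_maltsev_and_weakly_majority
    (C : Type u) [Category.{v} C] [HasFiniteLimits C] :
    AriMatr.HasClosedRels C (strongMonos C) ↔
      MalMatr.HasClosedRels C (strongMonos C) ∧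
        MajMatr.HasClosedRels C (strongMonos C) := by
  constructor
  · intro hAri
    exact ⟨fun _ _ _ pr hP r hr _ f =>
        (hAri.isClosedSet_relColumns pr hP r hr f).malMatr_right_mem_of_ari,
      fun _ _ _ pr hP r hr _ f =>
        (hAri.isClosedSet_relColumns pr hP r hr f).majMatr_right_mem_of_ari⟩
  · rintro ⟨hMal, hMaj⟩ _ _ _ pr hP r hr _ f
    exact Matr.IsClosedSet.ariMatr_right_mem_of_mal_of_maj
      (hMal.isClosedSet_relColumns pr hP r hr f) (hMaj.isClosedSet_relColumns pr hP r hr f)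
end
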